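/- Let f : ℤ₂ → ℤ₂ be a 1-Lipschitz transitive map and let g : ℤ₂ → ℤ₂ be a derivative of f modulo 4 with parameter K. Then for every x ∈ ℤ₂ and every i ≥ 0 one has ∏_{j=0}^{i+2^K−1} g(f^[j](x)) ≡ ∏_{j=0}^{i−1} g(f^[j](x)) (mod 4), i.e. ‖∏_{j=0}^{i+2^K−1} g(f^[j](x)) − ∏_{j=0}^{i−1} g(f^[j](x))‖ ≤ 2^(−2). (In particular the derivative of the i-th iterate of f at x is, modulo 4, a periodic function of i with period 2^K.) -/

import Mathlib

open Function Finset

/-- `a ≡ b (mod 2^s)` in the 2-adic integers. -/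
def CongMod (s : ℕ) (a b : ℤ_[2]) : Prop := ‖a - b‖ ≤ ((2 : ℝ) ^ s)⁻¹

/-- `f` is 1-Lipschitz for the 2-adic norm (a T-function). -/
def OneLip (f : ℤ_[2] → ℤ_[2]) : Prop := ∀ a b : ℤ_[2], ‖f a - f b‖ ≤ ‖a - b‖

/-- `f` is transitive modulo `2^n`. -/
def TransMod (f : ℤ_[2] → ℤ_[2]) (n : ℕ) : Prop :=
  ∀ x y : ℤ_[2], ∃ i < 2 ^ n, CongMod n (f^[i] x) y

/-- `f` is transitive (single cycle modulo every power of 2). -/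
def TransitiveT (f : ℤ_[2] → ℤ_[2]) : Prop := ∀ n : ℕ, 1 ≤ n → TransMod f n

/-- `f` is bijective modulo `2^n`. -/
def BijMod (f : ℤ_[2] → ℤ_[2]) (n : ℕ) : Prop :=
  (∀ a b : ℤ_[2], CongMod n (f a) (f b) → CongMod n a b) ∧
  (∀ y : ℤ_[2], ∃ x : ℤ_[2], CongMod n (f x) y)

/-- `f` is bijective (measure-preserving T-function). -/
def BijectiveT (f : ℤ_[2] → ℤ_[2]) : Prop := ∀ n : ℕ, 1 ≤ n → BijMod f n

/-- `g` is a derivative of `f` modulo `2^M` with parameter `K`. -/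
def IsDerivMod (f g : ℤ_[2] → ℤ_[2]) (M K : ℕ) : Prop :=
  ∀ x h : ℤ_[2], ‖h‖ ≤ ((2 : ℝ) ^ K)⁻¹ →
    ‖f (x + h) - f x - g x * h‖ ≤ ((2 : ℝ) ^ M)⁻¹ * ‖h‖

/-- The `n`-th binary digit of a 2-adic integer, as an element of `ZMod 2`.
`PadicInt.appr x n` is the unique integer in `{0, …, 2^n - 1}` congruent to `x` mod `2^n`. -/
noncomputable def delta (n : ℕ) (x : ℤ_[2]) : ZMod 2 :=
  (((x.appr (n + 1) - x.appr n) / 2 ^ n : ℕ) : ZMod 2)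

/-! Write `G = ∏_{j < 2^K} g (f^[j] x)`. Transitivity makes the orbit of `x` return to `x` modulo
`2^n` exactly at time `2^n`, so `h = f^[2^K] x - x` has norm `2^-K` and
`f^[2^(K+1)] x - x = (f^[2^K] (x + h) - f^[2^K] x) + h` has norm `2^-(K+1)`. By the chain rule
the first summand is `G h` up to an error of norm `2^-(K+2)`, hence `‖1 + G‖ = 1/2`. In `ℤ₂` the
only residue of norm `1/2` modulo 4 is `2`, so `G ≡ 1 (mod 4)`; splitting the product at `i`
gives the theorem. -/

namespace PadicInt

variable {p : ℕ} [Fact p.Prime]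

lemma norm_le_inv_pow_iff_toZModPow_eq_zero (x : ℤ_[p]) (n : ℕ) :
    ‖x‖ ≤ ((p : ℝ) ^ n)⁻¹ ↔ toZModPow n x = 0 := by
  rw [← zpow_natCast, ← zpow_neg, norm_le_pow_iff_mem_span_pow, ← ker_toZModPow,
    RingHom.mem_ker]

lemma norm_le_inv_pow_succ_iff (x : ℤ_[p]) (n : ℕ) :
    ‖x‖ ≤ ((p : ℝ) ^ (n + 1))⁻¹ ↔ ‖x‖ < ((p : ℝ) ^ n)⁻¹ := by
  simp only [← zpow_natCast, ← zpow_neg]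
  rw [norm_le_pow_iff_norm_lt_pow_add_one]
  push_cast
  ring_nf

lemma norm_sub_one_lt_one_of_norm_eq_one {u : ℤ_[2]} (hu : ‖u‖ = 1) : ‖u - 1‖ < 1 := by
  obtain ⟨n, hn, hmem⟩ := exists_mem_range u
  rw [IsLocalRing.mem_maximalIdeal, mem_nonunits] at hmem
  interval_cases n
  · simp [hu] at hmem
  · simpa using hmem

lemma norm_sub_two_le_of_norm_eq_half {a : ℤ_[2]} (ha : ‖a‖ = 2⁻¹) : ‖a - 2‖ ≤ 4⁻¹ := by
  have h2 : ‖(2 : ℤ_[2])‖ = 2⁻¹ := by simpa using norm_p (p := 2)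
  obtain ⟨c, rfl⟩ : (2 : ℤ_[2]) ∣ a := by
    simpa using (norm_lt_one_iff_dvd a).1 (by rw [ha]; norm_num)
  have hc : ‖c‖ = 1 := by
    rw [norm_mul, h2] at ha
    linarith
  have hc1 : ‖c - 1‖ ≤ 2⁻¹ := by
    simpa using (norm_le_inv_pow_succ_iff (p := 2) (c - 1) 0).2
      (by simpa using norm_sub_one_lt_one_of_norm_eq_one hc)
  rw [← mul_sub_one, norm_mul, h2]
  linarith

end PadicInt

lemma congMod_iff_toZModPow_eq {s : ℕ} {a b : ℤ_[2]} :
    CongMod s a b ↔ PadicInt.toZModPow s a = PadicInt.toZModPow s b := by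
  rw [CongMod, ← sub_eq_zero, ← map_sub]
  simpa using PadicInt.norm_le_inv_pow_iff_toZModPow_eq_zero (a - b) s

lemma CongMod.mul_left {s : ℕ} {a b : ℤ_[2]} (h : CongMod s a b) (c : ℤ_[2]) :
    CongMod s (c * a) (c * b) := by
  rw [congMod_iff_toZModPow_eq] at h ⊢
  simp only [map_mul, h]

lemma transMod_zero (f : ℤ_[2] → ℤ_[2]) : TransMod f 0 :=
  fun x y => ⟨0, one_pos, by simpa [CongMod] using PadicInt.norm_le_one _⟩

lemma TransitiveT.transMod {f : ℤ_[2] → ℤ_[2]} (hf : TransitiveT f) (n : ℕ) : TransMod f n := by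
  rcases n.eq_zero_or_pos with rfl | hn
  · exact transMod_zero f
  · exact hf n hn

namespace TransMod

variable {f : ℤ_[2] → ℤ_[2]} {n : ℕ}

lemma eq_of_congMod_iterate (hf : TransMod f n) (x : ℤ_[2]) {i j : ℕ} (hi : i < 2 ^ n)
    (hj : j < 2 ^ n) (h : CongMod n (f^[i] x) (f^[j] x)) : i = j := by
  have : NeZero (2 ^ n) := ⟨by positivity⟩
  let orbit : Fin (2 ^ n) → ZMod (2 ^ n) := fun k => PadicInt.toZModPow n (f^[k] x)
  -- `2 ^ n` iterates hit all `2 ^ n` residues, so they hit each one once.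
  have hsurj : Function.Surjective orbit := fun y => by
    obtain ⟨k, hk, hky⟩ := hf x (y.val : ℤ_[2])
    exact ⟨⟨k, hk⟩, by simpa [orbit, congMod_iff_toZModPow_eq] using hky⟩
  have hinj := ((Fintype.bijective_iff_surjective_and_card orbit).2 ⟨hsurj, by simp⟩).injective
  simpa using @hinj ⟨i, hi⟩ ⟨j, hj⟩ (congMod_iff_toZModPow_eq.1 h)

lemma not_congMod_iterate (hf : TransMod f n) (x : ℤ_[2]) {m : ℕ} (hm0 : 0 < m)
    (hm : m < 2 ^ n) : ¬ CongMod n (f^[m] x) x := fun h =>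
  hm0.ne' (hf.eq_of_congMod_iterate x hm (by positivity) h)

lemma congMod_iterate_two_pow (hf : TransMod f n) (x : ℤ_[2]) :
    CongMod n (f^[2 ^ n] x) x := by
  obtain ⟨i, hi, hix⟩ := hf (f x) x
  replace hix : CongMod n (f^[i + 1] x) x := by rwa [iterate_succ_apply]
  have hi' : i + 1 = 2 ^ n := by
    by_contra hne
    exact hf.not_congMod_iterate x i.succ_pos (by omega) hix
  rwa [hi'] at hix

end TransMod

lemma TransitiveT.norm_iterate_two_pow_sub {f : ℤ_[2] → ℤ_[2]} (hf : TransitiveT f) (n : ℕ)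
    (x : ℤ_[2]) : ‖f^[2 ^ n] x - x‖ = ((2 : ℝ) ^ n)⁻¹ := by
  refine le_antisymm ((hf.transMod n).congMod_iterate_two_pow x) (not_lt.1 fun hlt => ?_)
  refine (hf.transMod (n + 1)).not_congMod_iterate x (by positivity)
    (Nat.pow_lt_pow_right one_lt_two n.lt_succ_self) ?_
  simpa [CongMod] using (PadicInt.norm_le_inv_pow_succ_iff (p := 2) _ n).2 (by simpa using hlt)

namespace IsDerivMod

variable {f g : ℤ_[2] → ℤ_[2]} {M K : ℕ}

lemma norm_sub_le (hg : IsDerivMod f g M K) {x h : ℤ_[2]} (hh : ‖h‖ ≤ ((2 : ℝ) ^ K)⁻¹) :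
    ‖f (x + h) - f x‖ ≤ ‖h‖ := by
  have herr : ‖f (x + h) - f x - g x * h‖ ≤ ‖h‖ :=
    (hg x h hh).trans (mul_le_of_le_one_left (norm_nonneg h) (inv_le_one_of_one_le₀
      (one_le_pow₀ one_le_two)))
  have hlin : ‖g x * h‖ ≤ ‖h‖ := by
    rw [norm_mul]
    exact mul_le_of_le_one_left (norm_nonneg h) (PadicInt.norm_le_one _)
  simpa using (PadicInt.nonarchimedean _ _).trans (max_le herr hlin)

lemma comp {f' g' : ℤ_[2] → ℤ_[2]} (hg : IsDerivMod f g M K) (hg' : IsDerivMod f' g' M K) :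
    IsDerivMod (f' ∘ f) (fun x => g' (f x) * g x) M K := by
  intro x h hh
  set δ := f (x + h) - f x
  have hδ : ‖δ‖ ≤ ‖h‖ := hg.norm_sub_le hh
  have hsplit : f' (f (x + h)) - f' (f x) - g' (f x) * g x * h =
      (f' (f x + δ) - f' (f x) - g' (f x) * δ) + g' (f x) * (f (x + h) - f x - g x * h) := by
    rw [add_sub_cancel]
    ring
  simp only [comp_apply, hsplit]
  refine (PadicInt.nonarchimedean _ _).trans (max_le ?_ ?_)
  · exact (hg' _ δ (hδ.trans hh)).trans (by gcongr)
  · rw [norm_mul]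
    exact mul_le_of_le_one_left (norm_nonneg _) (PadicInt.norm_le_one _) |>.trans (hg x h hh)

lemma iterate (hg : IsDerivMod f g M K) (n : ℕ) :
    IsDerivMod f^[n] (fun x => ∏ j ∈ range n, g (f^[j] x)) M K := by
  induction n with
  | zero =>
    intro x h _
    simp only [iterate_zero, id_eq, range_zero, prod_empty, one_mul, add_sub_cancel_left,
      sub_self, norm_zero]
    positivity
  | succ n ih =>
    convert ih.comp hg using 1
    · exact iterate_succ' f n
    · ext x
      rw [prod_range_succ, mul_comm]

end IsDerivMod

lemma TransitiveT.prod_deriv_orbit_congMod_one {f g : ℤ_[2] → ℤ_[2]} {K : ℕ}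
    (hf : TransitiveT f) (hg : IsDerivMod f g 2 K) (x : ℤ_[2]) :
    CongMod 2 (∏ j ∈ range (2 ^ K), g (f^[j] x)) 1 := by
  set G := ∏ j ∈ range (2 ^ K), g (f^[j] x)
  set h := f^[2 ^ K] x - x
  set D := f^[2 ^ (K + 1)] x - x
  have hh : ‖h‖ = ((2 : ℝ) ^ K)⁻¹ := hf.norm_iterate_two_pow_sub K x
  have hD : ‖D‖ = ((2 : ℝ) ^ (K + 1))⁻¹ := hf.norm_iterate_two_pow_sub (K + 1) x
  have hstep : f^[2 ^ K] (x + h) = f^[2 ^ (K + 1)] x := by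
    rw [add_sub_cancel, ← iterate_add_apply, ← two_mul, ← pow_succ']
  -- `D = (f^[2^K] (x + h) - f^[2^K] x) + h`, and the chain rule linearises the first summand.
  have herr : ‖D - (1 + G) * h‖ < ‖D‖ := by
    have hchain := hg.iterate (2 ^ K) x h hh.le
    rw [hstep] at hchain
    calc ‖D - (1 + G) * h‖ = ‖f^[2 ^ (K + 1)] x - f^[2 ^ K] x - G * h‖ := by
          simp only [D, h]; congr 1; ring
      _ ≤ ((2 : ℝ) ^ 2)⁻¹ * ((2 : ℝ) ^ K)⁻¹ := by rw [← hh]; exact hchain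
      _ < ‖D‖ := by
          rw [hD, ← mul_inv, ← pow_add]
          exact inv_strictAnti₀ (by positivity) (pow_lt_pow_right₀ one_lt_two (by omega))
  have hG : ‖1 + G‖ = 2⁻¹ := by
    have hA : ‖(1 + G) * h‖ = ‖D‖ := by
      simpa only [norm_neg] using (PadicInt.norm_eq_of_norm_add_lt_left
        (z2 := -((1 + G) * h)) (by rwa [← sub_eq_add_neg])).symm
    rw [norm_mul, hh, hD, pow_succ, mul_inv, mul_comm] at hA
    exact mul_left_cancel₀ (by positivity) hA
  have hG1 : G - 1 = 1 + G - 2 := by ring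
  rw [CongMod, hG1]
  exact (PadicInt.norm_sub_two_le_of_norm_eq_half hG).trans_eq (by norm_num)

theorem iterate_deriv_periodic_general (f g : ℤ_[2] → ℤ_[2]) (K : ℕ)
    (hft : TransitiveT f) (hg : IsDerivMod f g 2 K) :
    ∀ x : ℤ_[2], ∀ i : ℕ,
      ‖(∏ j ∈ Finset.range (i + 2 ^ K), g (f^[j] x)) -
        ∏ j ∈ Finset.range i, g (f^[j] x)‖ ≤ ((2 : ℝ) ^ (2 : ℕ))⁻¹ := by
  intro x i
  have hsplit : ∏ j ∈ range (i + 2 ^ K), g (f^[j] x) =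
      (∏ j ∈ range i, g (f^[j] x)) * ∏ j ∈ range (2 ^ K), g (f^[j] (f^[i] x)) := by
    simp only [prod_range_add, ← iterate_add_apply, add_comm]
  simpa [hsplit, CongMod] using (hft.prod_deriv_orbit_congMod_one hg (f^[i] x)).mul_left
    (∏ j ∈ range i, g (f^[j] x))

/-- Modulo 4, the derivative of the `i`-th iterate of a transitive T-function is a
periodic function of `i` with period `2^K`. -/
theorem iterate_deriv_periodic (f g : ℤ_[2] → ℤ_[2]) (K : ℕ)
    (hf : OneLip f) (hft : TransitiveT f) (hg : IsDerivMod f g 2 K) :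
    ∀ x : ℤ_[2], ∀ i : ℕ,
      ‖(∏ j ∈ Finset.range (i + 2 ^ K), g (f^[j] x)) -
        ∏ j ∈ Finset.range i, g (f^[j] x)‖ ≤ ((2 : ℝ) ^ (2 : ℕ))⁻¹ :=
  iterate_deriv_periodic_general f g K hft hg
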